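/- arXiv:math/0611188 — 5 statements merged into one kernel-verified Lean document; each statement's English description precedes it below -/
import Mathlib

section
/- Let σ : ℤ^p → ℤ^n be a linear map (group homomorphism of free abelian groups). Then there exist constants L, M > 0 such that for every v ∈ ℤ^n lying in the image of ℕ^p under σ, there exists u ∈ ℕ^p with σ(u) = v and |u| < L·|v| + M, where |·| denotes the ℓ¹ (taxicab) norm. -/
open Finset

def norm1 {n : ℕ} (v : Fin n → ℤ) : ℤ := ∑ i, |v i|

namespace NPB

def dot {n : ℕ} (x y : Fin n → ℤ) : ℤ := ∑ j, x j * y j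

lemma norm1_nonneg {n : ℕ} (v : Fin n → ℤ) : 0 ≤ norm1 v :=
  Finset.sum_nonneg fun i _ => abs_nonneg _

lemma norm1_add_le {n : ℕ} (a b : Fin n → ℤ) : norm1 (a + b) ≤ norm1 a + norm1 b := by
  rw [norm1, norm1, norm1, ← Finset.sum_add_distrib]
  exact Finset.sum_le_sum fun i _ => abs_add_le _ _

lemma norm1_smul {n : ℕ} (c : ℤ) (x : Fin n → ℤ) : norm1 (c • x) = |c| * norm1 x := by
  simp [norm1, abs_mul, Finset.mul_sum]

lemma norm1_of_nonneg {n : ℕ} {u : Fin n → ℤ} (h : ∀ i, 0 ≤ u i) : norm1 u = ∑ i, u i :=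
  Finset.sum_congr rfl fun i _ => abs_of_nonneg (h i)

lemma dot_le_norm1 {n : ℕ} (y w : Fin n → ℤ) : dot y w ≤ norm1 y * norm1 w := by
  calc dot y w ≤ ∑ j, |y j| * |w j| :=
        Finset.sum_le_sum fun j _ => (le_abs_self _).trans (abs_mul _ _).le
    _ ≤ ∑ j, |y j| * norm1 w := Finset.sum_le_sum fun j _ =>
        mul_le_mul_of_nonneg_left
          (Finset.single_le_sum (fun k _ => abs_nonneg (w k)) (Finset.mem_univ j)) (abs_nonneg _)
    _ = norm1 y * norm1 w := by rw [← Finset.sum_mul]; rfl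

lemma single_eq_smul {p : ℕ} (i : Fin p) (c : ℤ) :
    Pi.single i c = c • (Pi.single i 1 : Fin p → ℤ) := by
  funext j
  by_cases h : j = i <;> simp [Pi.single_apply, h]

lemma sigma_expand {p n : ℕ} (σ : (Fin p → ℤ) →+ (Fin n → ℤ)) (u : Fin p → ℤ) :
    σ u = ∑ i, u i • σ (Pi.single i 1) := by
  conv_lhs => rw [← Finset.univ_sum_single u, map_sum]
  exact Finset.sum_congr rfl fun i _ => by rw [single_eq_smul, map_zsmul]

def insHom {p : ℕ} (i : Fin (p + 1)) : (Fin p → ℤ) →+ (Fin (p + 1) → ℤ) :=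
  AddMonoidHom.mk' (fun w => Fin.insertNth i 0 w) (by
    intro a b
    funext j
    refine Fin.succAboveCases i ?_ ?_ j
    · simp
    · intro j; simp)

lemma decomp {p : ℕ} (i : Fin (p + 1)) (u : Fin (p + 1) → ℤ) :
    u = Fin.insertNth i 0 (Fin.removeNth i u) + Pi.single i (u i) := by
  funext j
  refine Fin.succAboveCases i ?_ ?_ j
  · simp
  · intro j
    simp [Fin.removeNth, Pi.single_eq_of_ne (Fin.succAbove_ne i j),
      Function.update_of_ne (Fin.succAbove_ne i j)]


theorem gordan {n : ℕ} : ∀ (p : ℕ) (g : Fin p → Fin n → ℤ),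
    (∃ c : Fin p → ℤ, (∀ i, 0 ≤ c i) ∧ (∃ i, 0 < c i) ∧ ∀ j, ∑ i, c i * g i j = 0) ∨
    (∃ y : Fin n → ℤ, ∀ i, 0 < dot y (g i)) := by
  intro p
  induction p with
  | zero => exact fun g => Or.inr ⟨0, fun i => i.elim0⟩
  | succ p ih =>
    intro g
    rcases ih (fun i => g i.castSucc) with ⟨c', hc0, ⟨i₀, hi₀⟩, hsum⟩ | ⟨y₀, hy₀⟩
    · refine Or.inl ⟨Fin.snoc c' 0, ?_, ⟨i₀.castSucc, by simp [hi₀]⟩, ?_⟩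
      · intro i
        refine Fin.lastCases ?_ ?_ i
        · simp
        · intro i; simpa using hc0 i
      · intro j
        rw [Fin.sum_univ_castSucc]
        simpa using hsum j
    · set P : Fin n → ℤ := g (Fin.last p) with hP
      by_cases hq : 0 < dot P P
      · set d : Fin p → ℤ := fun i => dot P (g i.castSucc) with hd
        set q : ℤ := dot P P with hqdef
        rcases ih (fun i => fun jj => q * g i.castSucc jj - d i * P jj) with
          ⟨c', hc0, ⟨i₀, hi₀⟩, hs⟩ | ⟨y', hy'⟩
        · -- combination case
          have key : ∀ j, q * ∑ i, c' i * g i.castSucc j = (∑ i, c' i * d i) * P j := by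
            intro j
            have h1 := hs j
            have h2 : ∑ i, c' i * (q * g i.castSucc j - d i * P j)
                = q * (∑ i, c' i * g i.castSucc j) - (∑ i, c' i * d i) * P j := by
              rw [Finset.mul_sum, Finset.sum_mul, ← Finset.sum_sub_distrib]
              exact Finset.sum_congr rfl fun i _ => by ring
            rw [h2] at h1
            linarith
          set s : ℤ := ∑ i, c' i * d i with hsdef
          by_cases hs' : s ≤ 0
          · refine Or.inl ⟨Fin.snoc (fun i => q * c' i) (-s), ?_, ?_, ?_⟩
            · intro i
              refine Fin.lastCases ?_ ?_ i
              · simpa using hs'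
              · intro i; simpa using mul_nonneg hq.le (hc0 i)
            · exact ⟨i₀.castSucc, by simpa using mul_pos hq hi₀⟩
            · intro j
              rw [Fin.sum_univ_castSucc]
              simp only [Fin.snoc_castSucc, Fin.snoc_last]
              have h3 : ∑ i, q * c' i * g i.castSucc j = q * ∑ i, c' i * g i.castSucc j := by
                rw [Finset.mul_sum]; exact Finset.sum_congr rfl fun i _ => by ring
              rw [h3, key j]
              ring
          · push_neg at hs'
            have hqq : q * ∑ i, c' i * dot y₀ (g i.castSucc) = s * dot y₀ P := by
              have h4 : q * ∑ i, c' i * dot y₀ (g i.castSucc)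
                  = ∑ j, y₀ j * (q * ∑ i, c' i * g i.castSucc j) := by
                calc q * ∑ i, c' i * dot y₀ (g i.castSucc)
                    = ∑ i, ∑ j, y₀ j * (q * (c' i * g i.castSucc j)) := by
                      rw [Finset.mul_sum]
                      refine Finset.sum_congr rfl fun i _ => ?_
                      unfold dot
                      rw [Finset.mul_sum, Finset.mul_sum]
                      exact Finset.sum_congr rfl fun j _ => by ring
                  _ = ∑ j, ∑ i, y₀ j * (q * (c' i * g i.castSucc j)) := Finset.sum_comm
                  _ = ∑ j, y₀ j * (q * ∑ i, c' i * g i.castSucc j) := by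
                      refine Finset.sum_congr rfl fun j _ => ?_
                      simp only [Finset.mul_sum]
              rw [h4]
              have h5 : ∀ j, y₀ j * (q * ∑ i, c' i * g i.castSucc j) = s * (y₀ j * P j) := by
                intro j; rw [key j]; ring
              rw [Finset.sum_congr rfl fun j _ => h5 j, ← Finset.mul_sum]
              rfl
            have hpos : 0 < ∑ i, c' i * dot y₀ (g i.castSucc) :=
              Finset.sum_pos' (fun i _ => mul_nonneg (hc0 i) (hy₀ i).le)
                ⟨i₀, Finset.mem_univ _, mul_pos hi₀ (hy₀ i₀)⟩
            have h6 : 0 < s * dot y₀ P := hqq ▸ mul_pos hq hpos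
            have hyP : 0 < dot y₀ P := by nlinarith
            exact Or.inr ⟨y₀, fun i => Fin.lastCases hyP hy₀ i⟩
        · -- dual case
          set a : ℤ := dot y' P with ha
          set w : Fin n → ℤ := fun jj => q * y' jj - a * P jj with hw
          have hwG : ∀ i : Fin p, dot w (g i.castSucc)
              = dot y' (fun jj => q * g i.castSucc jj - d i * P jj) := by
            intro i
            have L : dot w (g i.castSucc)
                = q * (∑ j, y' j * g i.castSucc j) - a * (∑ j, P j * g i.castSucc j) := by
              unfold dot
              rw [Finset.mul_sum, Finset.mul_sum, ← Finset.sum_sub_distrib]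
              exact Finset.sum_congr rfl fun j _ => by simp [hw]; ring
            have R : dot y' (fun jj => q * g i.castSucc jj - d i * P jj)
                = q * (∑ j, y' j * g i.castSucc j) - d i * (∑ j, y' j * P j) := by
              unfold dot
              rw [Finset.mul_sum, Finset.mul_sum, ← Finset.sum_sub_distrib]
              exact Finset.sum_congr rfl fun j _ => by ring
            rw [L, R, hd, ha]
            unfold dot
            ring
          have hwP : dot w P = 0 := by
            have L : dot w P = q * (∑ j, y' j * P j) - a * (∑ j, P j * P j) := by
              unfold dot
              rw [Finset.mul_sum, Finset.mul_sum, ← Finset.sum_sub_distrib]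
              exact Finset.sum_congr rfl fun j _ => by simp [hw]; ring
            rw [L, ha, hqdef]
            unfold dot
            ring
          set s : ℤ := 1 + ∑ i : Fin p, |d i| with hsdef
          have hs1 : ∀ i : Fin p, |d i| ≤ s - 1 := by
            intro i
            have h := Finset.single_le_sum (f := fun i : Fin p => |d i|)
              (fun k _ => abs_nonneg _) (Finset.mem_univ i)
            omega
          have hspos : 0 < s := by
            have : 0 ≤ ∑ i : Fin p, |d i| := Finset.sum_nonneg fun i _ => abs_nonneg _
            omega
          set y : Fin n → ℤ := fun jj => s * w jj + P jj with hy
          have hyG : ∀ x : Fin n → ℤ, dot y x = s * dot w x + dot P x := by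
            intro x
            unfold dot
            rw [Finset.mul_sum, ← Finset.sum_add_distrib]
            exact Finset.sum_congr rfl fun j _ => by simp [hy]; ring
          refine Or.inr ⟨y, ?_⟩
          intro i
          refine Fin.lastCases ?_ ?_ i
          · rw [hyG, hwP]
            simpa using hq
          · intro i
            rw [hyG]
            have h1 : 0 < dot w (g i.castSucc) := by rw [hwG]; exact hy' i
            have h2 : 1 ≤ dot w (g i.castSucc) := h1
            have h3 : s * 1 ≤ s * dot w (g i.castSucc) :=
              mul_le_mul_of_nonneg_left h2 hspos.le
            have h4 : -(s - 1) ≤ dot P (g i.castSucc) := by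
              have h5 := hs1 i
              have h6 := neg_abs_le (d i)
              simp only [hd] at h5 h6
              omega
            omega
      · -- P = 0
        have hP0 : ∀ j, P j = 0 := by
          have hqe : dot P P = 0 :=
            le_antisymm (not_lt.mp hq) (Finset.sum_nonneg fun j _ => mul_self_nonneg _)
          intro j
          have := (Finset.sum_eq_zero_iff_of_nonneg (fun j _ => mul_self_nonneg (P j))).mp hqe j
            (Finset.mem_univ j)
          exact mul_self_eq_zero.mp this
        refine Or.inl ⟨Fin.snoc 0 1, ?_, ⟨Fin.last p, by simp⟩, ?_⟩
        · intro i
          refine Fin.lastCases ?_ ?_ i <;> simp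
        · intro j
          rw [Fin.sum_univ_castSucc]
          simpa using hP0 j

end NPB

open NPB in
/-- Proposition 3.1: for a linear map σ : ℤ^p → ℤ^n there are constants L, M > 0
such that every element of σ(ℕ^p) has a preimage in ℕ^p of norm < L·|v| + M. -/
theorem linear_map_nonneg_preimage_bound {p n : ℕ} (σ : (Fin p → ℤ) →+ (Fin n → ℤ)) :
    ∃ L M : ℤ, 0 < L ∧ 0 < M ∧
      ∀ v : Fin n → ℤ, (∃ u : Fin p → ℤ, (∀ i, 0 ≤ u i) ∧ σ u = v) →
        ∃ u : Fin p → ℤ, (∀ i, 0 ≤ u i) ∧ σ u = v ∧ norm1 u < L * norm1 v + M := by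
  induction p with
  | zero =>
    refine ⟨1, 1, one_pos, one_pos, ?_⟩
    rintro v ⟨u, hu, rfl⟩
    refine ⟨u, hu, rfl, ?_⟩
    have h1 : norm1 u = 0 := by simp [norm1]
    have h2 := norm1_nonneg (σ u)
    linarith
  | succ p ih =>
    rcases gordan (p + 1) (fun i => σ (Pi.single i 1)) with
      ⟨z, hz0, ⟨i₁, hi₁⟩, hzker⟩ | ⟨y, hy⟩
    · -- kernel case: descent
      have H := fun i : Fin (p + 1) => ih (σ.comp (NPB.insHom i))
      choose L M hL hM hLM using H
      set Z : ℤ := norm1 z with hZ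
      set G : Fin (p + 1) → ℤ := fun i => norm1 (σ (Pi.single i 1)) with hG
      have hZnn : 0 ≤ Z := norm1_nonneg z
      have hGnn : ∀ i, 0 ≤ G i := fun i => norm1_nonneg _
      have hsumnn : ∀ i : Fin (p+1), 0 ≤ L i * (Z * G i) + M i := fun i =>
        add_nonneg (mul_nonneg (hL i).le (mul_nonneg hZnn (hGnn i))) (hM i).le
      refine ⟨(∑ i, L i) + 1, (∑ i, (L i * (Z * G i) + M i)) + Z + 1, ?_, ?_, ?_⟩
      · have : (0:ℤ) ≤ ∑ i, L i := Finset.sum_nonneg fun i _ => (hL i).le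
        linarith
      · have : (0:ℤ) ≤ ∑ i, (L i * (Z * G i) + M i) :=
          Finset.sum_nonneg fun i _ => hsumnn i
        linarith
      · rintro v ⟨u₀, hu₀, hσ₀⟩
        have hz : σ z = 0 := by
          have he := sigma_expand σ z
          funext j
          rw [he]
          simp only [Finset.sum_apply, Pi.smul_apply, smul_eq_mul, Pi.zero_apply]
          exact hzker j
        -- take a preimage of minimal norm
        obtain ⟨m, ⟨u, hu, hσu, hmu⟩, hmin⟩ := Nat.lt_wfRel.wf.has_min
          {m : ℕ | ∃ u : Fin (p+1) → ℤ, (∀ k, 0 ≤ u k) ∧ σ u = v ∧ norm1 u = (m : ℤ)}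
          ⟨(norm1 u₀).toNat, u₀, hu₀, hσ₀, (Int.toNat_of_nonneg (norm1_nonneg u₀)).symm⟩
        have hex : ∃ i, u i < z i := by
          by_contra hc
          push_neg at hc
          have hnn : ∀ k, 0 ≤ (u - z) k := fun k => sub_nonneg.mpr (hc k)
          have hσ' : σ (u - z) = v := by rw [map_sub, hz, hσu, sub_zero]
          have hnz : norm1 (u - z) = norm1 u - norm1 z := by
            rw [norm1_of_nonneg hnn, norm1_of_nonneg hu, norm1_of_nonneg hz0,
              ← Finset.sum_sub_distrib]
            exact Finset.sum_congr rfl fun k _ => rfl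
          have hzpos : 0 < norm1 z := by
            rw [norm1_of_nonneg hz0]
            exact Finset.sum_pos' (fun i _ => hz0 i) ⟨i₁, Finset.mem_univ _, hi₁⟩
          have hnn2 := norm1_nonneg (u - z)
          refine hmin (norm1 (u - z)).toNat
            ⟨u - z, hnn, hσ', (Int.toNat_of_nonneg hnn2).symm⟩ ?_
          show (norm1 (u - z)).toNat < m
          omega
        obtain ⟨i, hiz⟩ := hex
        have hui : 0 ≤ u i := hu i
        have huiZ : u i ≤ Z := by
          have h1 : z i ≤ |z i| := le_abs_self _
          have h2 : |z i| ≤ Z :=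
            Finset.single_le_sum (f := fun k => |z k|) (fun k _ => abs_nonneg _)
              (Finset.mem_univ i)
          omega
        have hdec : σ u = σ.comp (NPB.insHom i) (Fin.removeNth i u)
            + u i • σ (Pi.single i 1) := by
          conv_lhs => rw [decomp i u]
          rw [map_add]
          congr 1
          rw [single_eq_smul, map_zsmul]
        have hpre : ∃ w : Fin p → ℤ, (∀ k, 0 ≤ w k) ∧
            σ.comp (NPB.insHom i) w = v - u i • σ (Pi.single i 1) := by
          refine ⟨Fin.removeNth i u, fun k => hu _, ?_⟩
          rw [eq_sub_iff_add_eq, ← hdec, hσu]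
        obtain ⟨w', hw'0, hw'σ, hw'n⟩ := hLM i _ hpre
        refine ⟨Fin.insertNth i 0 w' + Pi.single i (u i), ?_, ?_, ?_⟩
        · intro k
          refine Fin.succAboveCases i ?_ ?_ k
          · simpa using hui
          · intro j
            simpa [Pi.single_eq_of_ne (Fin.succAbove_ne i j),
              Function.update_of_ne (Fin.succAbove_ne i j)] using hw'0 j
        · rw [map_add, single_eq_smul, map_zsmul]
          have : σ (Fin.insertNth i 0 w') = σ.comp (NPB.insHom i) w' := rfl
          rw [this, hw'σ]
          ring
        · have hnu : norm1 ((Fin.insertNth i 0 w' + Pi.single i (u i) : Fin (p+1) → ℤ))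
              = u i + norm1 w' := by
            rw [norm1, Fin.sum_univ_succAbove _ i]
            have e1 : |(Fin.insertNth i 0 w' + Pi.single i (u i) : Fin (p+1) → ℤ) i| = u i := by
              simp [abs_of_nonneg hui]
            have e2 : ∀ j : Fin p,
                |(Fin.insertNth i 0 w' + Pi.single i (u i) : Fin (p+1) → ℤ) (i.succAbove j)|
                  = |w' j| := by
              intro j
              simp [Pi.single_eq_of_ne (Fin.succAbove_ne i j),
                Function.update_of_ne (Fin.succAbove_ne i j)]
            rw [e1, Finset.sum_congr rfl fun j _ => e2 j]
            rfl
          rw [hnu]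
          -- estimates
          have hb1 : norm1 (v - u i • σ (Pi.single i 1)) ≤ norm1 v + u i * G i := by
            have h1 := norm1_add_le v (-(u i) • σ (Pi.single i 1))
            rw [norm1_smul, abs_neg, abs_of_nonneg hui] at h1
            have h2 : v - u i • σ (Pi.single i 1) = v + -(u i) • σ (Pi.single i 1) := by
              rw [neg_smul, ← sub_eq_add_neg]
            rw [h2]
            exact h1
          have hb2 : L i * norm1 (v - u i • σ (Pi.single i 1))
              ≤ L i * (norm1 v + u i * G i) := mul_le_mul_of_nonneg_left hb1 (hL i).le
          have hb3 : L i * norm1 v ≤ (∑ k, L k) * norm1 v :=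
            mul_le_mul_of_nonneg_right
              (Finset.single_le_sum (f := fun k => L k) (fun k _ => (hL k).le)
                (Finset.mem_univ i)) (norm1_nonneg v)
          have hb4 : L i * (u i * G i) ≤ L i * (Z * G i) :=
            mul_le_mul_of_nonneg_left (mul_le_mul_of_nonneg_right huiZ (hGnn i)) (hL i).le
          have hb5 : L i * (Z * G i) + M i ≤ ∑ k, (L k * (Z * G k) + M k) :=
            Finset.single_le_sum (f := fun k => L k * (Z * G k) + M k)
              (fun k _ => hsumnn k) (Finset.mem_univ i)
          have hb6 : 0 ≤ norm1 v := norm1_nonneg v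
          nlinarith [hw'n, hb2, hb3, hb4, hb5, hb6, huiZ]
    · -- dual case
      refine ⟨norm1 y + 1, 1, by have := norm1_nonneg y; linarith, one_pos, ?_⟩
      rintro v ⟨u, hu, rfl⟩
      refine ⟨u, hu, rfl, ?_⟩
      have e1 : dot y (σ u) = ∑ i, u i * dot y (σ (Pi.single i 1)) := by
        rw [sigma_expand σ u]
        unfold dot
        calc ∑ j, y j * (∑ i, u i • σ (Pi.single i 1)) j
            = ∑ j, ∑ i, u i * (y j * σ (Pi.single i 1) j) := by
              refine Finset.sum_congr rfl fun j _ => ?_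
              rw [Finset.sum_apply, Finset.mul_sum]
              exact Finset.sum_congr rfl fun i _ => by
                simp only [Pi.smul_apply, smul_eq_mul]; ring
          _ = ∑ i, ∑ j, u i * (y j * σ (Pi.single i 1) j) := Finset.sum_comm
          _ = ∑ i, u i * ∑ j, y j * σ (Pi.single i 1) j := by
              refine Finset.sum_congr rfl fun i _ => ?_
              rw [Finset.mul_sum]
      have e2 : norm1 u ≤ dot y (σ u) := by
        rw [e1, norm1_of_nonneg hu]
        exact Finset.sum_le_sum fun i _ => le_mul_of_one_le_right (hu i) (hy i)
      have e3 := dot_le_norm1 y (σ u)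
      have e4 := norm1_nonneg (σ u)
      nlinarith
end

section
/- Fix n, p, q ≥ 0 and vectors s₁, …, s_p, t₁, …, t_q ∈ ℤ^n. Then there exist constants P, Q > 0 such that for any s₀, t₀ ∈ ℤ^n, the linear sets S = { s₀ + λ₁s₁ + ⋯ + λ_p s_p : λᵢ ∈ ℕ } and T = { t₀ + μ₁t₁ + ⋯ + μ_q t_q : μⱼ ∈ ℕ } either do not intersect, or have a common element v with |v| < P·(|s₀| + |t₀|) + Q. -/
open scoped BigOperators

/-- The linear subset of ℤ^n with constant s₀ and generating vectors s. -/
def linSet {n p : ℕ} (s₀ : Fin n → ℤ) (s : Fin p → Fin n → ℤ) : Set (Fin n → ℤ) :=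
  {v | ∃ lam : Fin p → ℕ, v = s₀ + ∑ i, (lam i : ℤ) • s i}

lemma norm1_nonneg {n : ℕ} (v : Fin n → ℤ) : 0 ≤ norm1 v :=
  Finset.sum_nonneg fun _ _ => abs_nonneg _

lemma norm1_add_le {n : ℕ} (u v : Fin n → ℤ) : norm1 (u + v) ≤ norm1 u + norm1 v := by
  rw [norm1, norm1, norm1, ← Finset.sum_add_distrib]
  exact Finset.sum_le_sum fun i _ => by simpa using abs_add_le (u i) (v i)

lemma norm1_smul {n : ℕ} (k : ℤ) (v : Fin n → ℤ) : norm1 (k • v) = |k| * norm1 v := by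
  simp [norm1, Finset.mul_sum, abs_mul]

lemma norm1_sum_le {n : ℕ} {ι : Type*} (s : Finset ι) (f : ι → Fin n → ℤ) :
    norm1 (∑ i ∈ s, f i) ≤ ∑ i ∈ s, norm1 (f i) := by
  unfold norm1
  rw [Finset.sum_comm]
  refine Finset.sum_le_sum fun j _ => ?_
  simpa using Finset.abs_sum_le_sum_abs (fun i => f i j) s

lemma indep_bound {n m : ℕ} (a : Fin m → Fin n → ℤ)
    (h : LinearIndependent ℚ fun i => fun j => ((a i j : ℤ) : ℚ)) :
    ∃ C : ℤ, 0 < C ∧ ∀ (b : Fin n → ℤ) (x : Fin m → ℕ),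
      (∑ i, (x i : ℤ) • a i = b) → ∑ i, (x i : ℤ) ≤ C * (norm1 b + 1) := by
  classical
  set aq : Fin m → Fin n → ℚ := fun i => fun j => ((a i j : ℤ) : ℚ) with haq
  -- the linear map
  set M : Matrix (Fin n) (Fin m) ℚ := Matrix.of fun j i => aq i j with hM
  have hf : ∀ x : Fin m → ℚ, M.mulVecLin x = ∑ i, x i • aq i := by
    intro x
    funext j
    simp [hM, Matrix.mulVecLin, Matrix.mulVec, dotProduct, Finset.sum_apply,
      mul_comm]
  have hinj : Function.Injective M.mulVecLin := by
    intro x y hxy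
    have h0 : ∑ i, (x - y) i • aq i = 0 := by
      have : M.mulVecLin (x - y) = 0 := by rw [map_sub, hxy, sub_self]
      rw [hf] at this
      exact this
    have := Fintype.linearIndependent_iff.mp h (x - y) h0
    funext i
    have := this i
    simp only [Pi.sub_apply] at this
    linarith
  obtain ⟨g, hg⟩ := M.mulVecLin.exists_leftInverse_of_injective (LinearMap.ker_eq_bot.mpr hinj)
  set e : Fin n → Fin n → ℚ := fun i => fun j => if i = j then 1 else 0 with he
  set C₀ : ℚ := ∑ j, ∑ i, |g (e j) i| with hC₀
  have hC₀0 : 0 ≤ C₀ := Finset.sum_nonneg fun _ _ => Finset.sum_nonneg fun _ _ => abs_nonneg _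
  refine ⟨max 1 ⌈C₀⌉, lt_of_lt_of_le one_pos (le_max_left _ _), fun b x hx => ?_⟩
  set bq : Fin n → ℚ := fun j => ((b j : ℤ) : ℚ) with hbq
  have hxb : g bq = fun i => ((x i : ℤ) : ℚ) := by
    have h1 : M.mulVecLin (fun i => ((x i : ℤ) : ℚ)) = bq := by
      rw [hf]
      funext j
      have := congrFun hx j
      simp only [Finset.sum_apply, Pi.smul_apply, smul_eq_mul] at this ⊢
      simp only [haq, hbq]
      exact_mod_cast this
    calc g bq = g (M.mulVecLin fun i => ((x i : ℤ) : ℚ)) := by rw [h1]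
    _ = _ := by
      have := congrFun (congrArg (fun (h : _ →ₗ[ℚ] _) => h.toFun) hg) (fun i => ((x i : ℤ) : ℚ))
      simpa using this
  have hdecomp : g bq = ∑ j, bq j • g (e j) := by
    have hb : bq = ∑ j, bq j • e j := pi_eq_sum_univ bq
    conv_lhs => rw [hb]
    rw [map_sum]
    simp
  -- bound
  have hbound : (∑ i, ((x i : ℤ) : ℚ)) ≤ C₀ * ∑ j, |bq j| := by
    have h1 : ∀ i, ((x i : ℤ) : ℚ) = ∑ j, bq j * g (e j) i := by
      intro i
      rw [← congrFun hxb i, hdecomp]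
      simp [Finset.sum_apply]
    calc (∑ i, ((x i : ℤ) : ℚ)) = ∑ i, ∑ j, bq j * g (e j) i := by
          exact Finset.sum_congr rfl fun i _ => h1 i
    _ ≤ ∑ i, ∑ j, |bq j| * |g (e j) i| := by
          refine Finset.sum_le_sum fun i _ => Finset.sum_le_sum fun j _ => ?_
          calc bq j * g (e j) i ≤ |bq j * g (e j) i| := le_abs_self _
          _ = |bq j| * |g (e j) i| := abs_mul _ _
    _ = ∑ j, |bq j| * ∑ i, |g (e j) i| := by
          rw [Finset.sum_comm]
          exact Finset.sum_congr rfl fun j _ => by rw [Finset.mul_sum]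
    _ ≤ ∑ j, |bq j| * C₀ := by
          refine Finset.sum_le_sum fun j _ => ?_
          refine mul_le_mul_of_nonneg_left ?_ (abs_nonneg _)
          exact Finset.single_le_sum (f := fun j => ∑ i, |g (e j) i|)
            (fun j _ => Finset.sum_nonneg fun _ _ => abs_nonneg _) (Finset.mem_univ j)
    _ = C₀ * ∑ j, |bq j| := by rw [← Finset.sum_mul, mul_comm]
  have hnb : (∑ j, |bq j|) = ((norm1 b : ℤ) : ℚ) := by
    rw [norm1]
    push_cast
    rfl
  have hfin : ((∑ i, (x i : ℤ) : ℤ) : ℚ) ≤ ((max 1 ⌈C₀⌉ * (norm1 b + 1) : ℤ) : ℚ) := by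
    push_cast
    have hC : C₀ ≤ (max 1 ⌈C₀⌉ : ℤ) := by
      calc C₀ ≤ (⌈C₀⌉ : ℚ) := Int.le_ceil _
      _ ≤ _ := by exact_mod_cast le_max_right (1:ℤ) ⌈C₀⌉
    have hb0 : (0:ℚ) ≤ ∑ j, |bq j| := Finset.sum_nonneg fun _ _ => abs_nonneg _
    have hCpos : (0:ℚ) ≤ ((max 1 ⌈C₀⌉ : ℤ) : ℚ) := le_trans hC₀0 hC
    calc (∑ i, ((x i : ℤ) : ℚ)) ≤ C₀ * ∑ j, |bq j| := hbound
    _ ≤ ((max 1 ⌈C₀⌉ : ℤ) : ℚ) * ∑ j, |bq j| := mul_le_mul_of_nonneg_right hC hb0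
    _ ≤ ((max 1 ⌈C₀⌉ : ℤ) : ℚ) * (∑ j, |bq j| + 1) := by nlinarith
    _ = _ := by rw [hnb]; push_cast; ring
  exact_mod_cast hfin

lemma exists_int_dep {n m : ℕ} (a : Fin m → Fin n → ℤ)
    (h : ¬ LinearIndependent ℚ fun i => fun j => ((a i j : ℤ) : ℚ)) :
    ∃ c : Fin m → ℤ, (∑ i, c i • a i = 0) ∧ ∃ i, c i < 0 := by
  classical
  obtain ⟨g, hg0, i₀, hgi⟩ := Fintype.not_linearIndependent_iff.mp h
  set d : ℕ := ∏ i, (g i).den with hd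
  have hdpos : 0 < d := Finset.prod_pos fun i _ => (g i).pos
  set c : Fin m → ℤ := fun i => (g i).num * ((d / (g i).den : ℕ) : ℤ) with hc
  have hcq : ∀ i, ((c i : ℤ) : ℚ) = g i * (d : ℚ) := by
    intro i
    have hdvd : (g i).den ∣ d := Finset.dvd_prod_of_mem _ (Finset.mem_univ i)
    have h1 : ((g i).den : ℕ) * (d / (g i).den) = d := Nat.mul_div_cancel' hdvd
    calc ((c i : ℤ) : ℚ) = ((g i).num : ℚ) * ((d / (g i).den : ℕ) : ℚ) := by
          simp [hc]; left; norm_cast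
    _ = (g i * (g i).den) * ((d / (g i).den : ℕ) : ℚ) := by rw [Rat.mul_den_eq_num]
    _ = g i * (((g i).den * (d / (g i).den) : ℕ) : ℚ) := by push_cast; ring
    _ = g i * (d : ℚ) := by rw [h1]
  have hrel : ∑ i, c i • a i = 0 := by
    funext j
    have h0 : ∑ i, g i * ((a i j : ℤ) : ℚ) = 0 := by
      have := congrFun hg0 j
      simpa [Finset.sum_apply] using this
    have h2 : ((∑ i, c i * a i j : ℤ) : ℚ) = 0 := by
      push_cast
      calc (∑ i, ((c i : ℤ) : ℚ) * ((a i j : ℤ) : ℚ))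
          = ∑ i, (g i * (d : ℚ)) * ((a i j : ℤ) : ℚ) := by
            exact Finset.sum_congr rfl fun i _ => by rw [hcq]
      _ = (d : ℚ) * ∑ i, g i * ((a i j : ℤ) : ℚ) := by rw [Finset.mul_sum]; exact Finset.sum_congr rfl fun i _ => by ring
      _ = 0 := by rw [h0, mul_zero]
    have h3 : (∑ i, c i * a i j : ℤ) = 0 := by exact_mod_cast h2
    simpa [Finset.sum_apply] using h3
  have hci : c i₀ ≠ 0 := by
    intro hzero
    have : ((c i₀ : ℤ) : ℚ) = 0 := by rw [hzero]; norm_num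
    rw [hcq] at this
    rcases mul_eq_zero.mp this with h' | h'
    · exact hgi h'
    · have : (d : ℚ) ≠ 0 := by positivity
      exact this h'
  by_cases hneg : ∃ i, c i < 0
  · exact ⟨c, hrel, hneg⟩
  · push_neg at hneg
    refine ⟨-c, ?_, ⟨i₀, ?_⟩⟩
    · have : ∑ i, (-c) i • a i = -∑ i, c i • a i := by
        rw [← Finset.sum_neg_distrib]
        exact Finset.sum_congr rfl fun i _ => by simp [neg_smul]
      rw [this, hrel, neg_zero]
    · have : 0 < c i₀ := lt_of_le_of_ne (hneg i₀) (Ne.symm hci)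
      simpa using this

lemma key_bound {n : ℕ} : ∀ (m : ℕ) (a : Fin m → Fin n → ℤ), ∃ C : ℤ, 0 < C ∧
    ∀ b : Fin n → ℤ, (∃ x : Fin m → ℕ, ∑ i, (x i : ℤ) • a i = b) →
      ∃ x : Fin m → ℕ, (∑ i, (x i : ℤ) • a i = b) ∧ ∑ i, (x i : ℤ) ≤ C * (norm1 b + 1) := by
  intro m
  induction m with
  | zero =>
    intro a
    refine ⟨1, one_pos, fun b ⟨x, hx⟩ => ⟨x, hx, ?_⟩⟩
    have := norm1_nonneg b
    simp only [Finset.univ_eq_empty, Finset.sum_empty]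
    linarith
  | succ m IH =>
    intro a
    by_cases h : LinearIndependent ℚ fun i => fun j => ((a i j : ℤ) : ℚ)
    · obtain ⟨C, hC, hbound⟩ := indep_bound a h
      exact ⟨C, hC, fun b ⟨x, hx⟩ => ⟨x, hx, hbound b x hx⟩⟩
    · obtain ⟨c, hrel, hex⟩ := exists_int_dep a h
      -- constants
      set K : ℤ := ∑ i, |c i| with hK
      have hK1 : 1 ≤ K := by
        obtain ⟨i, hi⟩ := hex
        calc (1:ℤ) ≤ |c i| := Int.one_le_abs (by omega)
        _ ≤ K := Finset.single_le_sum (f := fun i => |c i|) (fun _ _ => abs_nonneg _)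
              (Finset.mem_univ i)
      have hKabs : ∀ i, |c i| ≤ K :=
        fun i => Finset.single_le_sum (f := fun i => |c i|) (fun _ _ => abs_nonneg _)
              (Finset.mem_univ i)
      set Amax : ℤ := ∑ i, norm1 (a i) with hAmax
      have hA0 : 0 ≤ Amax := Finset.sum_nonneg fun i _ => norm1_nonneg _
      have hAabs : ∀ i, norm1 (a i) ≤ Amax :=
        fun i => Finset.single_le_sum (f := fun i => norm1 (a i)) (fun i _ => norm1_nonneg _)
              (Finset.mem_univ i)
      set D : Fin (m+1) → ℤ := fun i₀ => (IH (fun j => a (i₀.succAbove j))).choose with hD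
      have hDspec : ∀ i₀ : Fin (m+1), 0 < D i₀ ∧
          ∀ b : Fin n → ℤ, (∃ x : Fin m → ℕ, ∑ j, (x j : ℤ) • a (i₀.succAbove j) = b) →
            ∃ x : Fin m → ℕ, (∑ j, (x j : ℤ) • a (i₀.succAbove j) = b) ∧
              ∑ j, (x j : ℤ) ≤ D i₀ * (norm1 b + 1) :=
        fun i₀ => (IH (fun j => a (i₀.succAbove j))).choose_spec
      set Cmax : ℤ := ∑ i₀, D i₀ with hCmax
      have hCmax0 : 0 < Cmax := Finset.sum_pos (fun i _ => (hDspec i).1) ⟨0, Finset.mem_univ _⟩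
      have hDle : ∀ i₀, D i₀ ≤ Cmax :=
        fun i₀ => Finset.single_le_sum (f := D) (fun i _ => le_of_lt (hDspec i).1)
              (Finset.mem_univ i₀)
      refine ⟨K + Cmax * (1 + K * Amax), by positivity, fun b ⟨x, hx⟩ => ?_⟩
      -- the shift step
      obtain ⟨i₀, hi₀S, hi₀min⟩ := Finset.exists_min_image
        (Finset.univ.filter fun i => c i < 0) (fun i => (x i : ℤ) / (-c i))
        (by obtain ⟨i, hi⟩ := hex; exact ⟨i, Finset.mem_filter.mpr ⟨Finset.mem_univ _, hi⟩⟩)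
      have hci₀ : c i₀ < 0 := (Finset.mem_filter.mp hi₀S).2
      set t : ℤ := (x i₀ : ℤ) / (-c i₀) with ht
      have ht0 : 0 ≤ t := Int.ediv_nonneg (Int.ofNat_nonneg _) (by omega)
      set y : Fin (m+1) → ℤ := fun i => (x i : ℤ) + t * c i with hy
      have hy0 : ∀ i, 0 ≤ y i := by
        intro i
        by_cases hci : c i < 0
        · have hle : t ≤ (x i : ℤ) / (-c i) :=
            hi₀min i (Finset.mem_filter.mpr ⟨Finset.mem_univ _, hci⟩)
          have hmod : (x i : ℤ) % (-c i) = (x i : ℤ) - (-c i) * ((x i : ℤ) / (-c i)) := by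
            rw [Int.emod_def]
          have hmn : 0 ≤ (x i : ℤ) % (-c i) := Int.emod_nonneg _ (by omega)
          have : t * (-c i) ≤ ((x i : ℤ) / (-c i)) * (-c i) :=
            mul_le_mul_of_nonneg_right hle (by omega)
          simp only [hy]
          nlinarith
        · push_neg at hci
          have : 0 ≤ t * c i := mul_nonneg ht0 hci
          simp only [hy]
          positivity
      have hysum : ∑ i, y i • a i = b := by
        calc ∑ i, y i • a i = ∑ i, ((x i : ℤ) • a i + t • (c i • a i)) := by
              refine Finset.sum_congr rfl fun i _ => ?_
              rw [hy, add_smul, mul_smul]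
        _ = (∑ i, (x i : ℤ) • a i) + t • ∑ i, c i • a i := by
              rw [Finset.sum_add_distrib, Finset.smul_sum]
        _ = b := by rw [hx, hrel, smul_zero, add_zero]
      have hysmall : y i₀ < -c i₀ := by
        have hmod : (x i₀ : ℤ) % (-c i₀) = (x i₀ : ℤ) - (-c i₀) * ((x i₀ : ℤ) / (-c i₀)) := by
          rw [Int.emod_def]
        have := Int.emod_lt_of_pos (x i₀ : ℤ) (b := -c i₀) (by omega)
        simp only [hy, ht]
        nlinarith [this, hmod]
      set k : ℤ := y i₀ with hk
      have hk0 : 0 ≤ k := hy0 i₀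
      have hkK : k ≤ K := by
        have h1 := hKabs i₀
        have h2 := neg_le_abs (c i₀)
        have h3 := hysmall
        simp only [hk]
        omega
      set b' : Fin n → ℤ := b - k • a i₀ with hb'
      have hb'norm : norm1 b' ≤ norm1 b + K * Amax := by
        have h1 : norm1 b' ≤ norm1 b + norm1 ((-k) • a i₀) := by
          have : b' = b + (-k) • a i₀ := by rw [hb']; module
          rw [this]
          exact norm1_add_le _ _
        have h2 : norm1 ((-k) • a i₀) = |(-k)| * norm1 (a i₀) := norm1_smul _ _
        have h3 : |(-k)| = k := by rw [abs_neg]; exact abs_of_nonneg hk0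
        have h4 : k * norm1 (a i₀) ≤ K * Amax :=
          mul_le_mul hkK (hAabs i₀) (norm1_nonneg _) (by omega)
        calc norm1 b' ≤ norm1 b + |(-k)| * norm1 (a i₀) := by rw [← h2]; exact h1
        _ = norm1 b + k * norm1 (a i₀) := by rw [h3]
        _ ≤ norm1 b + K * Amax := by linarith
      -- solution for the reduced system
      have hx'ex : ∃ x' : Fin m → ℕ, ∑ j, (x' j : ℤ) • a (i₀.succAbove j) = b' := by
        refine ⟨fun j => (y (i₀.succAbove j)).toNat, ?_⟩
        have hcast : ∀ j : Fin m, ((y (i₀.succAbove j)).toNat : ℤ) = y (i₀.succAbove j) :=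
          fun j => Int.toNat_of_nonneg (hy0 _)
        have hsplit := Fin.sum_univ_succAbove (fun i => y i • a i) i₀
        rw [hysum] at hsplit
        calc ∑ j, ((y (i₀.succAbove j)).toNat : ℤ) • a (i₀.succAbove j)
            = ∑ j, y (i₀.succAbove j) • a (i₀.succAbove j) :=
              Finset.sum_congr rfl fun j _ => by rw [hcast]
        _ = b - y i₀ • a i₀ := by rw [← sub_eq_of_eq_add' hsplit]
        _ = b' := by rw [hb', hk]
      obtain ⟨z, hz, hzb⟩ := (hDspec i₀).2 b' hx'ex
      -- reassemble
      set w : Fin (m+1) → ℕ := i₀.insertNth k.toNat z with hw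
      have hwsame : w i₀ = k.toNat := by simp [hw]
      have hwab : ∀ j : Fin m, w (i₀.succAbove j) = z j := fun j => by simp [hw]
      refine ⟨w, ?_, ?_⟩
      · have hsplit := Fin.sum_univ_succAbove
          (fun i => (w i : ℤ) • a i) i₀
        rw [hsplit]
        simp only [hwsame, hwab]
        rw [hz]
        have : ((k.toNat : ℕ) : ℤ) = k := Int.toNat_of_nonneg hk0
        rw [this, hb']
        module
      · have hsplit := Fin.sum_univ_succAbove
          (fun i => (w i : ℤ)) i₀
        rw [hsplit]
        simp only [hwsame, hwab]
        have hkk : ((k.toNat : ℕ) : ℤ) = k := Int.toNat_of_nonneg hk0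
        rw [hkk]
        have hnb : 0 ≤ norm1 b := norm1_nonneg b
        have h5 : ∑ j, (z j : ℤ) ≤ D i₀ * (norm1 b + K * Amax + 1) := by
          have h6 : D i₀ * (norm1 b' + 1) ≤ D i₀ * (norm1 b + K * Amax + 1) :=
            mul_le_mul_of_nonneg_left (by linarith) (le_of_lt (hDspec i₀).1)
          linarith
        have h7 : D i₀ * (norm1 b + K * Amax + 1) ≤ Cmax * (norm1 b + K * Amax + 1) :=
          mul_le_mul_of_nonneg_right (hDle i₀) (by nlinarith)
        have h8 : 0 ≤ Cmax * (K * Amax * norm1 b) :=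
          mul_nonneg (le_of_lt hCmax0) (mul_nonneg (mul_nonneg (by omega) hA0) hnb)
        have h9 : 0 ≤ K * norm1 b := mul_nonneg (by omega) hnb
        have h10 : Cmax * (norm1 b + K * Amax + 1) + Cmax * (K * Amax * norm1 b)
            = Cmax * (1 + K * Amax) * (norm1 b + 1) := by ring
        have h11 : (K + Cmax * (1 + K * Amax)) * (norm1 b + 1)
            = K * norm1 b + K + Cmax * (1 + K * Amax) * (norm1 b + 1) := by ring
        linarith

lemma norm1_neg {n : ℕ} (v : Fin n → ℤ) : norm1 (-v) = norm1 v := by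
  have := norm1_smul (-1) v
  simpa using this

/-- Theorem 3.2: with the generating vectors fixed, there are constants P, Q > 0 such
that two linear sets either do not intersect or have a common element of norm
less than P(|s₀| + |t₀|) + Q. -/
theorem linear_sets_intersection_bound {n p q : ℕ}
    (s : Fin p → Fin n → ℤ) (t : Fin q → Fin n → ℤ) :
    ∃ P Q : ℤ, 0 < P ∧ 0 < Q ∧
      ∀ s₀ t₀ : Fin n → ℤ,
        (linSet s₀ s ∩ linSet t₀ t).Nonempty →
          ∃ v ∈ linSet s₀ s ∩ linSet t₀ t,
            norm1 v < P * (norm1 s₀ + norm1 t₀) + Q := by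

  classical
  set a : Fin (p+q) → Fin n → ℤ := Fin.addCases (fun i => s i) (fun j => -(t j)) with ha
  obtain ⟨C, hC, hkey⟩ := key_bound (p+q) a
  set Amax : ℤ := ∑ i, norm1 (a i) with hAm
  have hA0 : 0 ≤ Amax := Finset.sum_nonneg fun i _ => norm1_nonneg _
  have hAabs : ∀ i, norm1 (a i) ≤ Amax :=
    fun i => Finset.single_le_sum (f := fun i => norm1 (a i)) (fun i _ => norm1_nonneg _)
      (Finset.mem_univ i)
  refine ⟨1 + C * (Amax + 1), C * (Amax + 1) + 1, by positivity, by positivity, ?_⟩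
  rintro s₀ t₀ ⟨w, ⟨lam, hw1⟩, ⟨mu, hw2⟩⟩
  set b : Fin n → ℤ := t₀ - s₀ with hb
  have hsol : ∃ x : Fin (p+q) → ℕ, ∑ i, (x i : ℤ) • a i = b := by
    refine ⟨Fin.addCases lam mu, ?_⟩
    rw [Fin.sum_univ_add]
    simp only [ha, Fin.addCases_left, Fin.addCases_right, smul_neg]
    have e1 : ∑ i, (lam i : ℤ) • s i = w - s₀ := by rw [hw1]; abel
    have e2 : ∑ j, (mu j : ℤ) • t j = w - t₀ := by rw [hw2]; abel
    rw [Finset.sum_neg_distrib, e1, e2, hb]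
    abel
  obtain ⟨z, hz, hzb⟩ := hkey b hsol
  set v : Fin n → ℤ := s₀ + ∑ i, (z (Fin.castAdd q i) : ℤ) • s i with hv
  have hzsplit : (∑ i, (z (Fin.castAdd q i) : ℤ) • s i)
      - (∑ j, (z (Fin.natAdd p j) : ℤ) • t j) = t₀ - s₀ := by
    have h := hz
    rw [Fin.sum_univ_add] at h
    simp only [ha, Fin.addCases_left, Fin.addCases_right, smul_neg] at h
    rw [Finset.sum_neg_distrib, ← sub_eq_add_neg] at h
    rw [h, hb]
  have hmemT : v ∈ linSet t₀ t := by
    refine ⟨fun j => z (Fin.natAdd p j), ?_⟩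
    rw [hv]
    have := hzsplit
    have goal : s₀ + ∑ i, (z (Fin.castAdd q i) : ℤ) • s i
        = t₀ + ∑ j, (z (Fin.natAdd p j) : ℤ) • t j := by
      have h' := sub_eq_iff_eq_add.mp hzsplit
      rw [h']
      abel
    exact goal
  refine ⟨v, ⟨⟨fun i => z (Fin.castAdd q i), rfl⟩, hmemT⟩, ?_⟩
  -- norm bound
  set S : ℤ := norm1 s₀ with hS
  set T : ℤ := norm1 t₀ with hT
  have hS0 : 0 ≤ S := norm1_nonneg _
  have hT0 : 0 ≤ T := norm1_nonneg _
  have hbnorm : norm1 b ≤ S + T := by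
    have : b = t₀ + (-s₀) := by rw [hb]; abel
    rw [this]
    calc norm1 (t₀ + (-s₀)) ≤ norm1 t₀ + norm1 (-s₀) := norm1_add_le _ _
    _ = T + S := by rw [norm1_neg]
    _ = S + T := by ring
  have hzsum0 : ∀ i, (0:ℤ) ≤ (z i : ℤ) := fun i => Int.ofNat_nonneg _
  have hleft : ∑ i : Fin p, (z (Fin.castAdd q i) : ℤ) ≤ ∑ i, (z i : ℤ) := by
    rw [Fin.sum_univ_add]
    have : 0 ≤ ∑ j : Fin q, (z (Fin.natAdd p j) : ℤ) :=
      Finset.sum_nonneg fun j _ => hzsum0 _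
    linarith
  have hvbound : norm1 v ≤ S + (∑ i, (z i : ℤ)) * Amax := by
    have h1 : norm1 v ≤ S + norm1 (∑ i, (z (Fin.castAdd q i) : ℤ) • s i) := by
      rw [hv]; exact norm1_add_le _ _
    have h2 : norm1 (∑ i, (z (Fin.castAdd q i) : ℤ) • s i)
        ≤ ∑ i : Fin p, norm1 ((z (Fin.castAdd q i) : ℤ) • s i) := norm1_sum_le _ _
    have h3 : ∀ i : Fin p, norm1 ((z (Fin.castAdd q i) : ℤ) • s i)
        ≤ (z (Fin.castAdd q i) : ℤ) * Amax := by
      intro i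
      rw [norm1_smul, abs_of_nonneg (hzsum0 _)]
      have hsA : norm1 (s i) ≤ Amax := by
        have := hAabs (Fin.castAdd q i)
        simpa [ha, Fin.addCases_left] using this
      exact mul_le_mul_of_nonneg_left hsA (hzsum0 _)
    have h4 : ∑ i : Fin p, norm1 ((z (Fin.castAdd q i) : ℤ) • s i)
        ≤ ∑ i : Fin p, (z (Fin.castAdd q i) : ℤ) * Amax :=
      Finset.sum_le_sum fun i _ => h3 i
    have h5 : ∑ i : Fin p, (z (Fin.castAdd q i) : ℤ) * Amax
        = (∑ i : Fin p, (z (Fin.castAdd q i) : ℤ)) * Amax := by rw [Finset.sum_mul]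
    have h6 : (∑ i : Fin p, (z (Fin.castAdd q i) : ℤ)) * Amax ≤ (∑ i, (z i : ℤ)) * Amax :=
      mul_le_mul_of_nonneg_right hleft hA0
    linarith
  have hz2 : (∑ i, (z i : ℤ)) * Amax ≤ C * (S + T + 1) * Amax := by
    refine mul_le_mul_of_nonneg_right ?_ hA0
    calc (∑ i, (z i : ℤ)) ≤ C * (norm1 b + 1) := hzb
    _ ≤ C * (S + T + 1) := mul_le_mul_of_nonneg_left (by linarith) hC.le
  have e1 : (1 + C * (Amax + 1)) * (S + T) + (C * (Amax + 1) + 1)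
      = (S + T) + C * Amax * (S + T) + C * (S + T) + C * Amax + C + 1 := by ring
  have e2 : C * (S + T + 1) * Amax = C * Amax * (S + T) + C * Amax := by ring
  have h9 : 0 ≤ C * (S + T) := mul_nonneg hC.le (by linarith)
  linarith
end

section
/- Every rational subset of ℤ^n (the value set of a finite automaton over ℤ^n) is a semilinear set, i.e., a finite union of sets of the form { s₀ + λ₁s₁ + ⋯ + λ_p s_p : λᵢ ∈ ℕ }. -/
open scoped BigOperators Pointwise

/-- Rational subsets of the additive group ℤ^n: the smallest class of subsets
containing the finite (here: empty and singleton) sets and closed under union,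
(pointwise) addition, and generated submonoid (Kleene star). -/
inductive IsRationalSubset {n : ℕ} : Set (Fin n → ℤ) → Prop
  | empty : IsRationalSubset ∅
  | singleton (v : Fin n → ℤ) : IsRationalSubset {v}
  | union {S T : Set (Fin n → ℤ)} :
      IsRationalSubset S → IsRationalSubset T → IsRationalSubset (S ∪ T)
  | add {S T : Set (Fin n → ℤ)} :
      IsRationalSubset S → IsRationalSubset T → IsRationalSubset (S + T)
  | star {S : Set (Fin n → ℤ)} :
      IsRationalSubset S → IsRationalSubset (AddSubmonoid.closure S : Set (Fin n → ℤ))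

/-! Semilinear subsets of a commutative monoid are closed under union, pointwise sum and
generated submonoid (`IsSemilinearSet.union`, `.add`, `.closure`), so induction on the rational
expression shows that every rational subset is semilinear. A linear set `a +ᵥ closure t` with `t`
finite is `linSet a s` for any enumeration `s` of `t`. -/

open Set

theorem IsRationalSubset.isSemilinearSet {n : ℕ} {S : Set (Fin n → ℤ)}
    (hS : IsRationalSubset S) : IsSemilinearSet S := by
  induction hS with
  | empty => exact .empty
  | singleton v => exact .singleton v
  | union _ _ ihS ihT => exact ihS.union ihT
  | add _ _ ihS ihT => exact ihS.add ihT
  | star _ ihS => exact ihS.closure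

theorem linSet_eq_vadd_closure_range {n p : ℕ} (s₀ : Fin n → ℤ) (s : Fin p → Fin n → ℤ) :
    linSet s₀ s = s₀ +ᵥ (AddSubmonoid.closure (range s) : Set (Fin n → ℤ)) := by
  ext v
  simp only [linSet, mem_ofPred_eq, mem_vadd_set, SetLike.mem_coe,
    AddSubmonoid.mem_closure_range_iff_of_fintype, natCast_zsmul, vadd_eq_add]
  constructor
  · rintro ⟨lam, rfl⟩
    exact ⟨_, ⟨lam, rfl⟩, rfl⟩
  · rintro ⟨_, ⟨lam, rfl⟩, rfl⟩
    exact ⟨lam, rfl⟩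

theorem IsLinearSet.exists_eq_linSet {n : ℕ} {t : Set (Fin n → ℤ)} (ht : IsLinearSet t) :
    ∃ (p : ℕ) (s₀ : Fin n → ℤ) (s : Fin p → Fin n → ℤ), t = linSet s₀ s := by
  obtain ⟨s₀, T, hT, rfl⟩ := ht
  obtain ⟨p, s, rfl⟩ := hT.fin_embedding
  exact ⟨p, s₀, s, (linSet_eq_vadd_closure_range s₀ s).symm⟩

theorem IsSemilinearSet.exists_eq_iUnion_linSet {n : ℕ} {S : Set (Fin n → ℤ)}
    (hS : IsSemilinearSet S) :
    ∃ (j : ℕ) (p : Fin j → ℕ) (s₀ : Fin j → Fin n → ℤ)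
      (s : (i : Fin j) → Fin (p i) → Fin n → ℤ), S = ⋃ i, linSet (s₀ i) (s i) := by
  obtain ⟨𝒯, h𝒯, hlin, rfl⟩ := hS
  obtain ⟨j, t, rfl⟩ := h𝒯.fin_embedding
  choose p s₀ s hts using fun i => (hlin (t i) (mem_range_self i)).exists_eq_linSet
  exact ⟨j, p, s₀, s, by rw [sUnion_range]; exact iUnion_congr hts⟩

/-- Parikh's theorem for ℤ^n: every rational subset of ℤ^n is semilinear. -/
theorem rational_subset_is_semilinear {n : ℕ} (S : Set (Fin n → ℤ))
    (hS : IsRationalSubset S) :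
    ∃ (j : ℕ) (p : Fin j → ℕ) (s₀ : Fin j → Fin n → ℤ)
      (s : (i : Fin j) → Fin (p i) → Fin n → ℤ),
      S = ⋃ i, linSet (s₀ i) (s i) :=
  hS.isSemilinearSet.exists_eq_iUnion_linSet
end

section
/- Let G and K be groups with K finitely generated, and let H be a finitely generated subgroup of K. If the word problem of K (with respect to some finite choice of generators) is accepted by a G-automaton, then the word problem of H (with respect to any finite choice of generators) is accepted by a G-automaton. -/
/-! Lifting the generators of `H` through `σ` gives `φ : Y* →* X*` with `σ ∘ φ = τ`, so the word
problem of `H` is the preimage under `φ` of that of `K`. A `G`-automaton for this preimage runs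
`A` on `φ w` while reading `w`, keeping the letters of `φ w` that `A` has not consumed yet in a
buffer; the buffer stays bounded, so the automaton is finite. -/

/-- A finite (nondeterministic) automaton over a monoid M: finitely many states,
a finite list of M-labelled edges, an initial state and a set of accepting states. -/
structure MAutomaton (M : Type*) [Monoid M] where
  numStates : ℕ
  edges : List (Fin numStates × M × Fin numStates)
  start : Fin numStates
  accept : Fin numStates → Prop

namespace MAutomaton

/-- `A.Reaches p m q` holds if there is a path in A from state p to state q whose
label (the product of the edge labels) is m. -/
inductive Reaches {M : Type*} [Monoid M] (A : MAutomaton M) :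
    Fin A.numStates → M → Fin A.numStates → Prop
  | refl (p : Fin A.numStates) : Reaches A p 1 p
  | step {p q r : Fin A.numStates} {e m : M} :
      (p, e, q) ∈ A.edges → Reaches A q m r → Reaches A p (e * m) r

end MAutomaton

/-- A G-automaton over the alphabet X is a finite automaton over the monoid
G × X*; it accepts w ∈ X* if some path from the initial state to an accepting
state is labelled (1, w). -/
def GAccepts {G : Type*} [Group G] {X : Type*}
    (A : MAutomaton (G × FreeMonoid X)) (w : FreeMonoid X) : Prop :=
  ∃ f, A.accept f ∧ A.Reaches A.start (1, w) f

inductive LabelledPath {S M : Type*} [Monoid M] (E : Set (S × M × S)) : S → M → S → Prop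
  | refl (p : S) : LabelledPath E p 1 p
  | step {p q r : S} {e m : M} : (p, e, q) ∈ E → LabelledPath E q m r → LabelledPath E p (e * m) r

namespace LabelledPath

variable {S S' M : Type*} [Monoid M] {E : Set (S × M × S)}

theorem trans {p q r : S} {m m' : M} (h : LabelledPath E p m q) (h' : LabelledPath E q m' r) :
    LabelledPath E p (m * m') r := by
  induction h with
  | refl => simpa using h'
  | step he _ ih => simpa [mul_assoc] using step he (ih h')

theorem map {E' : Set (S' × M × S')} (f : S → S')
    (hf : ∀ p e q, (p, e, q) ∈ E → (f p, e, f q) ∈ E') {p q : S} {m : M}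
    (h : LabelledPath E p m q) : LabelledPath E' (f p) m (f q) := by
  induction h with
  | refl => exact refl _
  | step he _ ih => exact step (hf _ _ _ he) ih

end LabelledPath

namespace MAutomaton

variable {M : Type*} [Monoid M]

theorem reaches_iff_labelledPath (A : MAutomaton M) {p q : Fin A.numStates} {m : M} :
    A.Reaches p m q ↔ LabelledPath {e | e ∈ A.edges} p m q := by
  constructor <;> intro h <;> induction h with
  | refl => exact .refl _
  | step he _ ih => exact .step he ih

theorem exists_of_finite_states {S : Type*} [Finite S] (E : Set (S × M × S)) (hE : E.Finite)
    (s₀ : S) (F : S → Prop) :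
    ∃ B : MAutomaton M, ∀ m,
      (∃ f, B.accept f ∧ B.Reaches B.start m f) ↔ ∃ f, F f ∧ LabelledPath E s₀ m f := by
  let e := Finite.equivFin S
  let B : MAutomaton M :=
    ⟨Nat.card S, hE.toFinset.toList.map fun t => (e t.1, t.2.1, e t.2.2), e s₀, F ∘ e.symm⟩
  have hB : ∀ p m q, (p, m, q) ∈ B.edges ↔ (e.symm p, m, e.symm q) ∈ E := by
    intro p m q
    simp only [B, List.mem_map, Finset.mem_toList, Set.Finite.mem_toFinset]
    constructor
    · rintro ⟨⟨a, m, b⟩, ht, h⟩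
      obtain ⟨rfl, rfl, rfl⟩ : e a = p ∧ m = _ ∧ e b = q := by simpa using h
      simpa using ht
    · exact fun h => ⟨_, h, by simp⟩
  refine ⟨B, fun m => ⟨fun ⟨f, hf, hr⟩ => ⟨e.symm f, hf, ?_⟩,
    fun ⟨f, hf, hr⟩ => ⟨e f, by simpa [B], ?_⟩⟩⟩
  · simpa [B] using ((reaches_iff_labelledPath B).1 hr).map e.symm fun p m q h => (hB p m q).1 h
  · exact (reaches_iff_labelledPath B).2 (hr.map e fun p m q h => (hB _ _ _).2 (by simpa))

/-- Only the finitely many states met by the edges and the initial state are ever visited. -/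
theorem exists_of_finite_edges {S : Type*} (E : Set (S × M × S)) (hE : E.Finite)
    (s₀ : S) (F : S → Prop) :
    ∃ B : MAutomaton M, ∀ m,
      (∃ f, B.accept f ∧ B.Reaches B.start m f) ↔ ∃ f, F f ∧ LabelledPath E s₀ m f := by
  let T : Set S := insert s₀ ((fun t => t.2.2) '' E)
  have : Finite T := ((hE.image _).insert s₀).to_subtype
  let ET : Set (T × M × T) := {t | (t.1.1, t.2.1, t.2.2.1) ∈ E}
  have hET : ET.Finite := hE.preimage fun a _ b _ h => by
    simp_all [Prod.ext_iff, Subtype.ext_iff]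
  have lift : ∀ {p m q}, LabelledPath E p m q → ∀ hp : p ∈ T,
      ∃ hq : q ∈ T, LabelledPath ET ⟨p, hp⟩ m ⟨q, hq⟩ := by
    intro p m q h
    induction h with
    | refl p => exact fun hp => ⟨hp, .refl _⟩
    | step he _ ih =>
      intro hp
      have hq : _ ∈ T := Or.inr ⟨_, he, rfl⟩
      obtain ⟨hr, hpath⟩ := ih hq
      exact ⟨hr, .step (show (⟨_, hp⟩, _, ⟨_, hq⟩) ∈ ET from he) hpath⟩
  obtain ⟨B, hB⟩ := exists_of_finite_states ET hET ⟨s₀, Set.mem_insert _ _⟩ (F ∘ Subtype.val)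
  refine ⟨B, fun m => (hB m).trans
    ⟨fun ⟨f, hf, hr⟩ => ⟨f, hf, hr.map Subtype.val fun _ _ _ h => h⟩, fun ⟨f, hf, hr⟩ => ?_⟩⟩
  obtain ⟨hf', hr'⟩ := lift hr (Set.mem_insert _ _)
  exact ⟨⟨f, hf'⟩, hf, hr'⟩

end MAutomaton

namespace FreeMonoid

variable {α β : Type*}

theorem exists_eq_mul_of_mul_eq_mul {a b c d : FreeMonoid α} (h : a * b = c * d)
    (hl : a.length ≤ c.length) : ∃ t, c = a * t ∧ b = t * d := by
  rcases List.append_eq_append_iff.1 (congrArg toList h) with ⟨t, hc, hb⟩ | ⟨t, ha, hd⟩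
  · exact ⟨ofList t, hc, hb⟩
  · obtain rfl : t = [] := by
      simpa [length, ha] using hl
    exact ⟨1, by simpa using ha.symm, by simpa using hd.symm⟩

theorem exists_mul_le_length_mul_map (φ : FreeMonoid β →* FreeMonoid α) {L : ℕ}
    (hL : ∀ y, (φ (of y)).length ≤ L) {k : ℕ} (u : FreeMonoid α) (w : FreeMonoid β)
    (hk : k ≤ (u * φ w).length) :
    ∃ w₁ w₂, w = w₁ * w₂ ∧ k ≤ (u * φ w₁).length ∧ (u * φ w₁).length ≤ max u.length (k + L) := by
  induction w using FreeMonoid.inductionOn' generalizing u with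
  | one => exact ⟨1, 1, rfl, by simpa using hk, by simp⟩
  | of_mul y w ih =>
    by_cases hu : k ≤ u.length
    · exact ⟨1, of y * w, rfl, by simpa using hu, by simp⟩
    obtain ⟨w₁, w₂, rfl, hk₁, hle⟩ := ih (u * φ (of y)) (by simpa [mul_assoc] using hk)
    have := hL y
    refine ⟨of y * w₁, w₂, (mul_assoc ..).symm, by simpa [mul_assoc] using hk₁, ?_⟩
    simp only [length_mul, map_mul] at hle ⊢
    omega

end FreeMonoid

section Buffer

open FreeMonoid

variable {G X Y : Type*} [Monoid G]

/-- In state `(p, u)` the simulated automaton `A` is in state `p`, and `u` is the part of the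
`φ`-image of the input read so far that `A` has not consumed yet. Buffers longer than `N` are
cut off. -/
def bufferEdges (A : MAutomaton (G × FreeMonoid X)) (φ : FreeMonoid Y →* FreeMonoid X) (N : ℕ) :
    Set ((Fin A.numStates × FreeMonoid X) × (G × FreeMonoid Y) ×
      (Fin A.numStates × FreeMonoid X)) :=
  {t | ∃ p g v q u, (p, (g, v), q) ∈ A.edges ∧ (v * u).length ≤ N ∧
    t = ((p, v * u), (g, 1), (q, u))} ∪
  {t | ∃ p u y, (u * φ (of y)).length ≤ N ∧ t = ((p, u), (1, of y), (p, u * φ (of y)))}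

variable {A : MAutomaton (G × FreeMonoid X)} {φ : FreeMonoid Y →* FreeMonoid X} {N : ℕ}

theorem finite_bufferEdges [Finite X] [Finite Y] : (bufferEdges A φ N).Finite := by
  have hW : {u : FreeMonoid X | u.length ≤ N}.Finite :=
    (List.finite_length_le X N).preimage toList.injective.injOn
  refine .union
    (((A.edges.finite_toSet.prod hW).image fun t => ((t.1.1, t.1.2.1.2 * t.2), (t.1.2.1.1, 1),
      (t.1.2.2, t.2))).subset ?_)
    (((Set.finite_univ.prod (hW.prod Set.finite_univ)).image fun t : _ × _ × Y =>
      ((t.1, t.2.1), (1, of t.2.2), (t.1, t.2.1 * φ (of t.2.2)))).subset ?_)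
  · rintro _ ⟨p, g, v, q, u, he, hN, rfl⟩
    exact ⟨((p, (g, v), q), u), ⟨he, by simp only [length_mul] at hN; simp; omega⟩, rfl⟩
  · rintro _ ⟨p, u, y, hN, rfl⟩
    exact ⟨(p, u, y), ⟨trivial, by simp only [length_mul] at hN; simp; omega, trivial⟩, rfl⟩

theorem LabelledPath.exists_reaches_of_bufferEdges {s s' : Fin A.numStates × FreeMonoid X}
    {m : G × FreeMonoid Y} (h : LabelledPath (bufferEdges A φ N) s m s') :
    ∃ c, A.Reaches s.1 (m.1, c) s'.1 ∧ s.2 * φ m.2 = c * s'.2 := by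
  induction h with
  | refl => exact ⟨1, .refl _, by simp⟩
  | step he _ ih =>
    obtain ⟨c, hc, hbuf⟩ := ih
    rcases he with ⟨p, g, v, q, u, he, -, ht⟩ | ⟨p, u, y, -, ht⟩ <;> cases ht
    · refine ⟨v * c, by simpa using hc.step he, ?_⟩
      simp only [Prod.snd_mul, one_mul, mul_assoc] at hbuf ⊢
      rw [hbuf]
    · refine ⟨c, by simpa using hc, ?_⟩
      simpa [mul_assoc] using hbuf

theorem labelledPath_bufferEdges_of_length_le (p : Fin A.numStates) {u : FreeMonoid X}
    {w : FreeMonoid Y} (h : (u * φ w).length ≤ N) :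
    LabelledPath (bufferEdges A φ N) (p, u) (1, w) (p, u * φ w) := by
  induction w using FreeMonoid.inductionOn' generalizing u with
  | one =>
    rw [map_one, mul_one]
    exact .refl _
  | of_mul y w ih =>
    have hy : (u * φ (of y)).length ≤ N := by
      simp only [map_mul, length_mul] at h ⊢
      omega
    have hrest := ih (u := u * φ (of y)) (by simpa [mul_assoc] using h)
    simpa [mul_assoc] using hrest.step (Or.inr ⟨p, u, y, hy, rfl⟩)

/-- Buffers of length `V + L` suffice: a letter of `w` is read only while the buffer is shorter
than the next edge label of `A`. -/
theorem MAutomaton.Reaches.labelledPath_bufferEdges {V L : ℕ}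
    (hV : ∀ p e q, (p, e, q) ∈ A.edges → e.2.length ≤ V) (hL : ∀ y, (φ (of y)).length ≤ L)
    {p q : Fin A.numStates} {m : G × FreeMonoid X} (h : A.Reaches p m q) {u : FreeMonoid X}
    {w : FreeMonoid Y} (hw : u * φ w = m.2) (hu : u.length ≤ V + L) :
    LabelledPath (bufferEdges A φ (V + L)) (p, u) (m.1, w) (q, 1) := by
  induction h generalizing u w with
  | refl p =>
    rw [Prod.snd_one] at hw
    simpa [hw] using labelledPath_bufferEdges_of_length_le (A := A) (φ := φ) p (u := u) (w := w)
      (N := V + L) (by rw [hw, length_one]; exact Nat.zero_le _)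
  | @step p q' r e m he _ ih =>
    obtain ⟨w₁, w₂, rfl, hk, hle⟩ :=
      exists_mul_le_length_mul_map φ hL u w (k := e.2.length) (by simp [hw, length_mul])
    obtain ⟨t, ht, hm⟩ := exists_eq_mul_of_mul_eq_mul (c := u * φ w₁) (d := φ w₂)
      (by rw [mul_assoc, ← map_mul, hw, Prod.snd_mul]) hk
    have hN : (u * φ w₁).length ≤ V + L := hle.trans (max_le hu (by have := hV _ _ _ he; omega))
    have hread := labelledPath_bufferEdges_of_length_le p (A := A) hN
    have hedge : ((p, e.2 * t), (e.1, 1), (q', t)) ∈ bufferEdges A φ (V + L) :=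
      Or.inl ⟨p, e.1, e.2, q', t, he, ht ▸ hN, rfl⟩
    have hrest := ih hm.symm (by rw [ht, length_mul] at hN; omega)
    rw [ht] at hread
    simpa [mul_assoc] using hread.trans (hrest.step hedge)

end Buffer

theorem exists_gAccepts_iff_gAccepts_map {G X Y : Type*} [Group G] [Finite X] [Finite Y]
    (A : MAutomaton (G × FreeMonoid X)) (φ : FreeMonoid Y →* FreeMonoid X) :
    ∃ B : MAutomaton (G × FreeMonoid Y), ∀ w, GAccepts B w ↔ GAccepts A (φ w) := by
  obtain ⟨V, hV⟩ := (A.edges.finite_toSet.image fun t => t.2.1.2.length).bddAbove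
  obtain ⟨L, hL⟩ := (Set.finite_range fun y => (φ (FreeMonoid.of y)).length).bddAbove
  obtain ⟨B, hB⟩ := MAutomaton.exists_of_finite_edges (bufferEdges A φ (V + L))
    finite_bufferEdges (A.start, 1) fun s => A.accept s.1 ∧ s.2 = 1
  refine ⟨B, fun w => (hB (1, w)).trans ⟨?_, fun ⟨f, hf, hr⟩ => ⟨(f, 1), ⟨hf, rfl⟩, ?_⟩⟩⟩
  · rintro ⟨⟨f, _⟩, ⟨hf, rfl⟩, hpath⟩
    obtain ⟨c, hc, hbuf⟩ := hpath.exists_reaches_of_bufferEdges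
    simp only [one_mul, mul_one] at hbuf
    exact ⟨f, hf, hbuf ▸ hc⟩
  · exact hr.labelledPath_bufferEdges (fun _ _ _ h => hV ⟨_, h, rfl⟩) (fun y => hL ⟨y, rfl⟩)
      (one_mul _) (by simp)

theorem subgroup_word_problem_accepted_general {G K : Type} [Group G] [Group K]
    (H : Subgroup K)
    {X : Type} [Fintype X] (σ : FreeMonoid X →* K) (hσ : Function.Surjective σ)
    (A : MAutomaton (G × FreeMonoid X)) (hA : ∀ w, GAccepts A w ↔ σ w = 1)
    {Y : Type} [Fintype Y] (τ : FreeMonoid Y →* H) :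
    ∃ B : MAutomaton (G × FreeMonoid Y), ∀ w, GAccepts B w ↔ τ w = 1 := by
  obtain ⟨φ, hφ⟩ : ∃ φ : FreeMonoid Y →* FreeMonoid X, σ.comp φ = H.subtype.comp τ :=
    ⟨FreeMonoid.lift fun y => (hσ _).choose, FreeMonoid.hom_eq fun _ => (hσ _).choose_spec⟩
  obtain ⟨B, hB⟩ := exists_gAccepts_iff_gAccepts_map A φ
  refine ⟨B, fun w => ?_⟩
  rw [hB, hA, ← MonoidHom.comp_apply, hφ, MonoidHom.comp_apply, Subgroup.coe_subtype,
    OneMemClass.coe_eq_one]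

/-- Proposition 2.1 (first part): if the word problem of a finitely generated group K
is accepted by a G-automaton with respect to some choice of generators, then the word
problem of any finitely generated subgroup H of K, with respect to any choice of
generators, is accepted by a G-automaton. -/
theorem subgroup_word_problem_accepted {G K : Type} [Group G] [Group K]
    (hK : Group.FG K) (H : Subgroup K) (hH : Group.FG H)
    {X : Type} [Fintype X] (σ : FreeMonoid X →* K) (hσ : Function.Surjective σ)
    (A : MAutomaton (G × FreeMonoid X)) (hA : ∀ w, GAccepts A w ↔ σ w = 1)
    {Y : Type} [Fintype Y] (τ : FreeMonoid Y →* H) (hτ : Function.Surjective τ) :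
    ∃ B : MAutomaton (G × FreeMonoid Y), ∀ w, GAccepts B w ↔ τ w = 1 :=
  subgroup_word_problem_accepted_general H σ hσ A hA τ
end

section
/- A finitely generated virtually abelian group H has a finite-index subgroup isomorphic to ℤ^k for some k ∈ ℕ; moreover, the growth of H is polynomial of degree exactly k. -/
/-!
In the finitely generated abelian group `K` the free part `ℤ^k` of the structure theorem has
finite index, hence so does its image `L` in `H`.

Growth: write `g ∈ H` as `l * t` with `l ∈ L ≅ ℤ^k` and `t` a fixed representative of the right
coset `L g`. Right multiplication by a generator moves the `ℤ^k`-coordinate of `l` by a bounded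
amount, so the ball of radius `m` injects into a box of side `O(m)` times the finite set of
cosets. Conversely, if `wᵢ` are words representing the basis vectors of `ℤ^k`, the products
`∏ wᵢ ^ aᵢ` with `0 ≤ aᵢ ≤ r` give `(r + 1)^k` distinct elements of length `O(r)`.
-/

/-- The ball of radius m in H with respect to a choice of generators σ. -/
def ball {H : Type*} [Group H] {X : Type*} (σ : FreeMonoid X →* H) (m : ℕ) : Set H :=
  {h : H | ∃ w : FreeMonoid X, σ w = h ∧ w.length ≤ m}

theorem CommGroup.exists_finiteIndex_mulEquiv_int_pow (G : Type*) [CommGroup G] [Group.FG G] :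
    ∃ (k : ℕ) (L : Subgroup G), L.FiniteIndex ∧ Nonempty (L ≃* Multiplicative (Fin k → ℤ)) := by
  obtain ⟨ι, j, _, _, p, hp, e, ⟨f⟩⟩ := CommGroup.equiv_free_prod_prod_multiplicative_zmod G
  have : ∀ i, NeZero (p i ^ e i) := fun i => ⟨pow_ne_zero _ (hp i).ne_zero⟩
  refine ⟨Fintype.card j, ((⊤ : Subgroup (j → Multiplicative ℤ)).prod ⊥).map f.symm.toMonoidHom,
    ⟨?_⟩, ⟨?_⟩⟩
  · rw [Subgroup.index_map_of_bijective f.symm.bijective, Subgroup.index_prod,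
      Subgroup.index_top, Subgroup.index_bot, one_mul]
    exact Nat.card_pos.ne'
  · exact (Subgroup.equivMapOfInjective _ _ f.symm.injective).symm.trans <|
      (Subgroup.prodEquiv _ _).trans <| MulEquiv.prodUnique.trans <| Subgroup.topEquiv.trans <|
      (MulEquiv.arrowCongr (Fintype.equivFin j) (MulEquiv.refl _)).trans
      (MulEquiv.piMultiplicative _).symm

theorem Subgroup.exists_finiteIndex_mulEquiv_int_pow_of_comm {H : Type*} [Group H]
    [Group.FG H] (K : Subgroup H) [K.FiniteIndex] (hK : ∀ x y : K, x * y = y * x) :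
    ∃ (k : ℕ) (L : Subgroup H), L.FiniteIndex ∧ Nonempty (L ≃* Multiplicative (Fin k → ℤ)) := by
  let _ : CommGroup K := { mul_comm := hK }
  have : Group.FG K := K.fg_of_index_ne_zero
  obtain ⟨k, L, hL, ⟨φ⟩⟩ := CommGroup.exists_finiteIndex_mulEquiv_int_pow K
  refine ⟨k, L.map K.subtype, ⟨?_⟩, ⟨(L.equivMapOfInjective _ K.subtype_injective).symm.trans φ⟩⟩
  rw [Subgroup.index_map_subtype]
  exact mul_ne_zero hL.index_ne_zero FiniteIndex.index_ne_zero

section Ball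

variable {H : Type*} [Group H] {X : Type*} (σ : FreeMonoid X →* H)

theorem ball_mono {a b : ℕ} (hab : a ≤ b) : ball σ a ⊆ ball σ b :=
  fun _ ⟨w, hw, hlen⟩ => ⟨w, hw, hlen.trans hab⟩

theorem ball_finite [Finite X] (m : ℕ) : (ball σ m).Finite :=
  ((List.finite_length_le X m).image σ).subset fun _ ⟨w, hw, hlen⟩ => ⟨w, hlen, hw⟩

variable {σ}

theorem one_mem_ball (m : ℕ) : 1 ∈ ball σ m :=
  ⟨1, map_one σ, Nat.zero_le m⟩

theorem mul_mem_ball {g h : H} {a b : ℕ} (hg : g ∈ ball σ a) (hh : h ∈ ball σ b) :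
    g * h ∈ ball σ (a + b) := by
  obtain ⟨v, rfl, hv⟩ := hg
  obtain ⟨w, rfl, hw⟩ := hh
  exact ⟨v * w, map_mul σ v w, (FreeMonoid.length_mul v w).trans_le (add_le_add hv hw)⟩

theorem npow_mem_ball {g : H} {a : ℕ} (hg : g ∈ ball σ a) (n : ℕ) : g ^ n ∈ ball σ (n * a) := by
  induction n with
  | zero => simpa using one_mem_ball 0
  | succ n ih => simpa [pow_succ, add_mul] using mul_mem_ball ih hg

theorem map_prod_mem_ball {M ι : Type*} [CommMonoid M] (f : M →* H) (s : Finset ι)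
    {x : ι → M} {n : ι → ℕ} (hx : ∀ i ∈ s, f (x i) ∈ ball σ (n i)) :
    f (∏ i ∈ s, x i) ∈ ball σ (∑ i ∈ s, n i) := by
  classical
  induction s using Finset.induction_on with
  | empty => simpa using one_mem_ball 0
  | insert a s ha ih =>
    rw [Finset.prod_insert ha, Finset.sum_insert ha, map_mul]
    exact mul_mem_ball (hx a (s.mem_insert_self a))
      (ih fun i hi => hx i (Finset.mem_insert_of_mem hi))

theorem exists_forall_mem_ball {ι : Type*} [Finite ι] (hσ : Function.Surjective σ)
    (g : ι → H) : ∃ N, ∀ i, g i ∈ ball σ N := by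
  choose w hw using fun i => hσ (g i)
  obtain ⟨N, hN⟩ := Finite.bddAbove_range fun i => (w i).length
  exact ⟨N, fun i => ⟨w i, hw i, hN ⟨i, rfl⟩⟩⟩

end Ball

theorem ofAdd_eq_prod_ofAdd_single_pow {ι : Type*} [Fintype ι] [DecidableEq ι] (v : ι → ℕ) :
    Multiplicative.ofAdd (fun i => (v i : ℤ)) =
      ∏ i, Multiplicative.ofAdd (Pi.single i (1 : ℤ)) ^ v i := by
  apply Multiplicative.toAdd.injective
  ext j
  simp [toAdd_prod, Finset.sum_apply, Pi.single_apply]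

section LowerBound

variable {H : Type*} [Group H] {X : Type*} [Finite X] {σ : FreeMonoid X →* H}

theorem exists_succ_pow_le_ncard_ball (hσ : Function.Surjective σ) {k : ℕ}
    {ψ : Multiplicative (Fin k → ℤ) →* H} (hψ : Function.Injective ψ) :
    ∃ c, 0 < c ∧ ∀ r, (r + 1) ^ k ≤ (ball σ (c * r)).ncard := by
  obtain ⟨N, hN⟩ :=
    exists_forall_mem_ball hσ fun i : Fin k => ψ (Multiplicative.ofAdd (Pi.single i 1))
  refine ⟨k * N + 1, Nat.succ_pos _, fun r => ?_⟩
  let box := Fintype.piFinset fun _ : Fin k => Finset.range (r + 1)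
  let f : (Fin k → ℕ) → H := fun v => ψ (Multiplicative.ofAdd fun i => (v i : ℤ))
  have hf_mem : ∀ v ∈ (box : Set (Fin k → ℕ)), f v ∈ ball σ ((k * N + 1) * r) := by
    intro v hv
    have hv : ∀ i, v i ≤ r := fun i =>
      Nat.lt_succ_iff.mp (Finset.mem_range.mp (Fintype.mem_piFinset.mp hv i))
    have hsum : ∑ i, v i * N ≤ (k * N + 1) * r := calc
      ∑ i, v i * N ≤ ∑ _i : Fin k, r * N :=
          Finset.sum_le_sum fun i _ => Nat.mul_le_mul_right N (hv i)
      _ = k * N * r := by rw [Finset.sum_const, Finset.card_fin, smul_eq_mul]; ring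
      _ ≤ (k * N + 1) * r := Nat.mul_le_mul_right r (Nat.le_succ _)
    refine ball_mono σ hsum ?_
    simp only [f, ofAdd_eq_prod_ofAdd_single_pow]
    exact map_prod_mem_ball ψ _ fun i _ => map_pow ψ _ (v i) ▸ npow_mem_ball (hN i) (v i)
  have hf_inj : Set.InjOn f box := fun v _ w _ hvw => by
    funext i
    exact_mod_cast congrFun (Multiplicative.ofAdd.injective (hψ hvw)) i
  calc (r + 1) ^ k = box.card := by simp [box]
    _ ≤ (ball σ ((k * N + 1) * r)).ncard := by
      rw [← Set.ncard_coe_finset]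
      exact Set.ncard_le_ncard_of_injOn f hf_mem hf_inj (ball_finite σ _)

theorem exists_pow_le_mul_ncard_ball (hσ : Function.Surjective σ) {k : ℕ}
    {ψ : Multiplicative (Fin k → ℤ) →* H} (hψ : Function.Injective ψ) :
    ∃ C, ∀ m, m ^ k ≤ C * (ball σ m).ncard := by
  obtain ⟨c, hc, hball⟩ := exists_succ_pow_le_ncard_ball hσ hψ
  refine ⟨c ^ k, fun m => ?_⟩
  calc m ^ k ≤ (c * (m / c + 1)) ^ k := Nat.pow_le_pow_left (Nat.lt_mul_div_succ m hc).le k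
    _ = c ^ k * (m / c + 1) ^ k := mul_pow _ _ _
    _ ≤ c ^ k * (ball σ (c * (m / c))).ncard := Nat.mul_le_mul_left _ (hball _)
    _ ≤ c ^ k * (ball σ m).ncard := Nat.mul_le_mul_left _
      (Set.ncard_le_ncard (ball_mono σ (Nat.mul_div_le m c)) (ball_finite σ m))

end LowerBound

theorem card_piFinset_Icc_neg (k B : ℕ) :
    (Fintype.piFinset fun _ : Fin k => Finset.Icc (-(B : ℤ)) B).card = (2 * B + 1) ^ k := by
  simp only [Fintype.card_piFinset, Int.card_Icc, Finset.prod_const, Finset.card_univ,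
    Fintype.card_fin]
  congr 1
  omega

section CosetCoordinates

variable {H : Type*} [Group H] (L : Subgroup H)

noncomputable def rightCosetRep (g : H) : H :=
  (Quotient.mk (QuotientGroup.rightRel L) g).out

theorem mul_inv_rightCosetRep_mem (g : H) : g * (rightCosetRep L g)⁻¹ ∈ L :=
  QuotientGroup.rightRel_apply.mp (Quotient.exact (Quotient.out_eq _))

theorem rightCosetRep_mul_of_mem {l : H} (hl : l ∈ L) (g : H) :
    rightCosetRep L (l * g) = rightCosetRep L g :=
  congrArg Quotient.out <| Quotient.sound <| QuotientGroup.rightRel_apply.mpr <| by simpa using hl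

instance [L.FiniteIndex] : Finite (Quotient (QuotientGroup.rightRel L)) :=
  .of_equiv _ (QuotientGroup.quotientRightRelEquivQuotientLeftRel L).symm

theorem Subgroup.index_eq_natCard_quotient_rightRel :
    L.index = Nat.card (Quotient (QuotientGroup.rightRel L)) :=
  Nat.card_congr (QuotientGroup.quotientRightRelEquivQuotientLeftRel L).symm

variable {L} {k : ℕ} (φ : L ≃* Multiplicative (Fin k → ℤ))

noncomputable def cosetCoord (g : H) : Fin k → ℤ :=
  (φ ⟨g * (rightCosetRep L g)⁻¹, mul_inv_rightCosetRep_mem L g⟩).toAdd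

theorem symm_cosetCoord_mul_rightCosetRep (g : H) :
    (φ.symm (.ofAdd (cosetCoord φ g)) : H) * rightCosetRep L g = g := by
  simp [cosetCoord]

theorem cosetCoord_mul (g x : H) :
    cosetCoord φ (g * x) = cosetCoord φ g + cosetCoord φ (rightCosetRep L g * x) := by
  have hrep : rightCosetRep L (rightCosetRep L g * x) = rightCosetRep L (g * x) := by
    rw [← rightCosetRep_mul_of_mem L (mul_inv_rightCosetRep_mem L g), ← mul_assoc,
      inv_mul_cancel_right]
  rw [cosetCoord, cosetCoord, cosetCoord, ← toAdd_mul, ← map_mul]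
  congr 2
  ext
  simp only [Subgroup.coe_mul, hrep]
  group

variable {X : Type*} {σ : FreeMonoid X →* H}

theorem abs_cosetCoord_mul_map_sub_le {C : ℤ}
    (hC : ∀ g x i, |cosetCoord φ (rightCosetRep L g * σ (.of x)) i| ≤ C) (g : H)
    (w : FreeMonoid X) (i : Fin k) :
    |cosetCoord φ (g * σ w) i - cosetCoord φ g i| ≤ C * w.length := by
  induction w using FreeMonoid.inductionOn' generalizing g with
  | one => simp
  | of_mul x w ih =>
    have hstep := cosetCoord_mul φ g (σ (.of x))
    rw [map_mul, ← mul_assoc, FreeMonoid.length_mul, FreeMonoid.length_of]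
    calc |cosetCoord φ (g * σ (.of x) * σ w) i - cosetCoord φ g i|
        = |(cosetCoord φ (g * σ (.of x) * σ w) i - cosetCoord φ (g * σ (.of x)) i) +
            cosetCoord φ (rightCosetRep L g * σ (.of x)) i| := by
          rw [hstep, Pi.add_apply]; ring_nf
      _ ≤ C * w.length + C := (abs_add_le _ _).trans (add_le_add (ih _) (hC g x i))
      _ = C * ↑(1 + w.length) := by push_cast; ring

theorem exists_abs_cosetCoord_map_le [L.FiniteIndex] [Finite X] (σ : FreeMonoid X →* H) :
    ∃ C₀ C : ℕ, ∀ w i, |cosetCoord φ (σ w) i| ≤ C₀ + C * w.length := by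
  obtain ⟨C, hC⟩ := Finite.bddAbove_range fun p : Quotient (QuotientGroup.rightRel L) × X × Fin k =>
    (cosetCoord φ (p.1.out * σ (.of p.2.1)) p.2.2).natAbs
  have hstep : ∀ g x i, |cosetCoord φ (rightCosetRep L g * σ (.of x)) i| ≤ C := fun g x i => by
    rw [Int.abs_eq_natAbs]
    exact_mod_cast hC ⟨(Quotient.mk _ g, x, i), rfl⟩
  obtain ⟨C₀, hC₀⟩ := Finite.bddAbove_range fun i => (cosetCoord φ 1 i).natAbs
  refine ⟨C₀, C, fun w i => ?_⟩
  have h₀ : |cosetCoord φ 1 i| ≤ C₀ := by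
    rw [Int.abs_eq_natAbs]
    exact_mod_cast hC₀ ⟨i, rfl⟩
  have h := abs_cosetCoord_mul_map_sub_le φ hstep 1 w i
  rw [one_mul] at h
  linarith [abs_sub_abs_le_abs_sub (cosetCoord φ (σ w) i) (cosetCoord φ 1 i)]

end CosetCoordinates

theorem exists_ncard_ball_le {H : Type*} [Group H] {L : Subgroup H} [L.FiniteIndex] {k : ℕ}
    (φ : L ≃* Multiplicative (Fin k → ℤ)) {X : Type*} [Finite X] (σ : FreeMonoid X →* H) :
    ∃ C, 0 < C ∧ ∀ m, (ball σ m).ncard ≤ C * (m + 1) ^ k := by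
  obtain ⟨C₀, C, hC⟩ := exists_abs_cosetCoord_map_le φ σ
  refine ⟨L.index * (2 * (C₀ + C) + 1) ^ k,
    Nat.mul_pos (Nat.pos_of_ne_zero Subgroup.FiniteIndex.index_ne_zero) (by positivity),
    fun m => ?_⟩
  let box := Fintype.piFinset fun _ : Fin k => Finset.Icc (-((C₀ + C * m : ℕ) : ℤ)) (C₀ + C * m : ℕ)
  let f : H → (Fin k → ℤ) × Quotient (QuotientGroup.rightRel L) :=
    fun g => (cosetCoord φ g, Quotient.mk _ g)
  have hf_mem : ∀ g ∈ ball σ m, f g ∈ (box : Set (Fin k → ℤ)) ×ˢ Set.univ := by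
    rintro _ ⟨w, rfl, hw⟩
    refine ⟨Fintype.mem_piFinset.mpr fun i => Finset.mem_Icc.mpr (abs_le.mp ?_), trivial⟩
    have hCw : (C : ℤ) * w.length ≤ C * m := by gcongr
    push_cast
    linarith [hC w i]
  have hf_inj : Set.InjOn f (ball σ m) := fun g _ g' _ hgg' => by
    rw [← symm_cosetCoord_mul_rightCosetRep φ g, ← symm_cosetCoord_mul_rightCosetRep φ g']
    simp only [f, Prod.ext_iff] at hgg'
    rw [rightCosetRep, rightCosetRep, hgg'.1, hgg'.2]
  calc (ball σ m).ncard ≤ ((box : Set (Fin k → ℤ)) ×ˢ Set.univ).ncard :=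
        Set.ncard_le_ncard_of_injOn f hf_mem hf_inj (box.finite_toSet.prod Set.finite_univ)
    _ = (2 * (C₀ + C * m) + 1) ^ k * L.index := by
        rw [Set.ncard_prod, Set.ncard_coe_finset, card_piFinset_Icc_neg, Set.ncard_univ,
          ← Subgroup.index_eq_natCard_quotient_rightRel]
    _ ≤ L.index * (2 * (C₀ + C) + 1) ^ k * (m + 1) ^ k := by
        rw [mul_comm, mul_assoc, ← mul_pow]
        gcongr
        nlinarith

/-- A finitely generated virtually abelian group has a finite-index subgroup
isomorphic to ℤ^k for some k, and its growth is polynomial of degree exactly k. -/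
theorem virtually_abelian_structure_and_growth {H : Type*} [Group H]
    (hfg : Group.FG H) (K : Subgroup H) (hKi : K.index ≠ 0)
    (hKab : ∀ x y : K, x * y = y * x) :
    ∃ (k : ℕ) (L : Subgroup H), L.index ≠ 0 ∧
      Nonempty (L ≃* Multiplicative (Fin k → ℤ)) ∧
      ∀ (X : Type) (_ : Fintype X) (σ : FreeMonoid X →* H), Function.Surjective σ →
        ∃ C : ℕ, 0 < C ∧ ∀ m : ℕ,
          (ball σ m).ncard ≤ C * (m + 1) ^ k ∧ m ^ k ≤ C * (ball σ m).ncard := by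
  have : K.FiniteIndex := ⟨hKi⟩
  obtain ⟨k, L, hL, ⟨φ⟩⟩ := K.exists_finiteIndex_mulEquiv_int_pow_of_comm hKab
  refine ⟨k, L, hL.index_ne_zero, ⟨φ⟩, fun X _ σ hσ => ?_⟩
  obtain ⟨C₁, hC₁, hupper⟩ := exists_ncard_ball_le φ σ
  obtain ⟨C₂, hlower⟩ := exists_pow_le_mul_ncard_ball hσ
    (ψ := L.subtype.comp φ.symm.toMonoidHom) (L.subtype_injective.comp φ.symm.injective)
  refine ⟨max C₁ C₂, hC₁.trans_le (le_max_left _ _), fun m => ⟨?_, ?_⟩⟩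
  · exact (hupper m).trans (Nat.mul_le_mul_right _ (le_max_left _ _))
  · exact (hlower m).trans (Nat.mul_le_mul_right _ (le_max_right _ _))
end
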